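/- arXiv:0803.3365 — 2 statements merged into one kernel-verified Lean document; each statement's English description precedes it below -/
import Mathlib

section
/- Let (F,W) be a mixed Hodge structure on V and set I^{p,q} = F^p ∩ σ(F^q) ∩ W_{p+q} for p,q ∈ ℤ. Then the following are equivalent: (i) there exists a grading Y of W with σYσ = Y and Y(F^p) ⊆ F^p for all p; (ii) V = ⊕_{p,q} I^{p,q}, F^p = ⊕_{r≥p, s} I^{r,s} for all p, and W_k = ⊕_{r+s≤k} I^{r,s} for all k. Moreover, when these conditions hold, the grading Y in (i) is unique and acts as multiplication by p+q on I^{p,q}. -/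
/-- A finite increasing filtration of `V` indexed by `ℤ`. -/
def FinIncrFil {V : Type*} [AddCommGroup V] [Module ℂ V] (W : ℤ → Submodule ℂ V) : Prop :=
  Monotone W ∧ (∃ a : ℤ, W a = ⊥) ∧ (∃ b : ℤ, W b = ⊤)

/-- A finite decreasing filtration of `V` indexed by `ℤ`. -/
def FinDecrFil {V : Type*} [AddCommGroup V] [Module ℂ V] (F : ℤ → Submodule ℂ V) : Prop :=
  Antitone F ∧ (∃ a : ℤ, F a = ⊤) ∧ (∃ b : ℤ, F b = ⊥)

/-- `σ` is a conjugation: a conjugate-linear involution of the complex vector space `V`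
(realizing `V` as the complexification of its fixed set `V_ℝ`). -/
def IsConjugation {V : Type*} [AddCommGroup V] [Module ℂ V] (σ : V →ₗ[ℝ] V) : Prop :=
  (∀ v, σ (σ v) = v) ∧ ∀ (c : ℂ) (v : V), σ (c • v) = (starRingEnd ℂ) c • σ v

/-- `(F, W)` is a mixed Hodge structure on `V` with respect to the conjugation `σ`:
`W` is a finite increasing σ-stable filtration, `F` a finite decreasing filtration,
and for every `k`, `Gr^W_k = F^p Gr^W_k ⊕ σ(F^{k-p+1} Gr^W_k)` for all `p`
(expressed elementwise on representatives). -/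
def IsMHS {V : Type*} [AddCommGroup V] [Module ℂ V] (σ : V →ₗ[ℝ] V)
    (F W : ℤ → Submodule ℂ V) : Prop :=
  FinIncrFil W ∧ (∀ k : ℤ, ∀ v ∈ W k, σ v ∈ W k) ∧ FinDecrFil F ∧
    ∀ k p : ℤ,
      (∀ v ∈ W k, ∃ a ∈ F p ⊓ W k, ∃ b ∈ F (k - p + 1) ⊓ W k, v - a - σ b ∈ W (k - 1)) ∧
      (∀ a ∈ F p ⊓ W k, ∀ b ∈ F (k - p + 1) ⊓ W k, a - σ b ∈ W (k - 1) → a ∈ W (k - 1))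

/-- A grading of an increasing filtration `W` of a complex vector space: a semisimple
endomorphism with integer eigenvalues with `W i = E_i(Y) ⊕ W (i-1)` for all `i`. -/
def IsGrading {V : Type*} [AddCommGroup V] [Module ℂ V] (W : ℤ → Submodule ℂ V)
    (Y : Module.End ℂ V) : Prop :=
  (⨆ i : ℤ, Y.eigenspace (i : ℂ)) = ⊤ ∧
    ∀ i : ℤ, W i = Y.eigenspace (i : ℂ) ⊔ W (i - 1) ∧
      Disjoint (Y.eigenspace (i : ℂ)) (W (i - 1))

/-- An endomorphism `X` of `V` is real: `σ X σ = X`. -/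
def IsRealEnd {V : Type*} [AddCommGroup V] [Module ℂ V] (σ : V →ₗ[ℝ] V)
    (X : Module.End ℂ V) : Prop :=
  ∀ v, σ (X (σ v)) = X v

/-! A real grading `Y` of `W` preserving `F` splits the whole situation: with `E_k` its
eigenspaces, `W_k = ⊕_{i ≤ k} E_i`, and `F^p`, `σ(F^q)` are sums of their intersections
with the `E_k`. Projecting the defining property of the mixed Hodge structure onto `E_k`
makes `F ∩ E_k` a pure Hodge structure of weight `k`:
`E_k = (F^p ∩ E_k) ⊕ σ(F^{k-p+1} ∩ E_k)`. Opposedness kills the components of an element of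
`I^{p,q}` in weights below `p + q`, so `I^{p,q} ⊆ E_{p+q}`, and the Hodge decomposition of
the pure pieces `E_k` gives (ii). Conversely, under (ii) the operator acting by `p + q` on
`I^{p,q}` grades `W`, preserves `F`, and is real because `σ(I^{p,q}) = I^{q,p}`; any such
grading acts this way on the `I^{p,q}`, which span `V`, so it is unique. -/

open DirectSum

namespace IsConjugation

variable {V : Type*} [AddCommGroup V] [Module ℂ V] {σ : V →ₗ[ℝ] V}

def toSemilinearMap (hσ : IsConjugation σ) : V →ₛₗ[starRingEnd ℂ] V where
  toFun := σ
  map_add' := σ.map_add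
  map_smul' := hσ.2

@[simp]
theorem coe_toSemilinearMap (hσ : IsConjugation σ) : ⇑hσ.toSemilinearMap = σ :=
  rfl

theorem map_intCast_smul (hσ : IsConjugation σ) (n : ℤ) (v : V) :
    σ ((n : ℂ) • v) = (n : ℂ) • σ v := by
  rw [hσ.2, map_intCast]

end IsConjugation

namespace DirectSum

section Decomposition

variable {ι R M : Type*} [DecidableEq ι] [Semiring R] [AddCommMonoid M] [Module R M]

section

variable (ℳ : ι → Submodule R M) [Decomposition ℳ]

theorem decompose_map_apply {G : Type*} [FunLike G M M] [AddMonoidHomClass G M M] (f : G)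
    (hf : ∀ i, ∀ x ∈ ℳ i, f x ∈ ℳ i) (x : M) (i : ι) :
    (decompose ℳ (f x) i : M) = f (decompose ℳ x i) := by
  induction x using Decomposition.inductionOn ℳ with
  | zero => simp
  | @homogeneous j m =>
    by_cases hji : j = i
    · subst hji
      rw [decompose_of_mem_same ℳ m.2, decompose_of_mem_same ℳ (hf j m m.2)]
    · rw [decompose_of_mem_ne ℳ m.2 hji, decompose_of_mem_ne ℳ (hf j m m.2) hji, map_zero]
  | add x y hx hy => simp [decompose_add, hx, hy]

theorem mem_biSup_iff {T : Set ι} {x : M} :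
    x ∈ ⨆ j ∈ T, ℳ j ↔ ∀ i ∉ T, (decompose ℳ x i : M) = 0 := by
  classical
  refine ⟨fun hx i hi => ?_, fun hx => ?_⟩
  · rw [iSup_subtype'] at hx
    induction hx using Submodule.iSup_induction' with
    | mem j y hy => exact decompose_of_mem_ne ℳ hy fun h => hi (h ▸ j.2)
    | zero => simp
    | add y z _ _ hy hz => simp [decompose_add, hy, hz]
  · rw [← sum_support_decompose ℳ x]
    refine Submodule.sum_mem _ fun i _ => ?_
    by_cases hi : i ∈ T
    · exact Submodule.mem_iSup_of_mem i (Submodule.mem_iSup_of_mem hi (decompose ℳ x i).2)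
    · rw [hx i hi]
      exact zero_mem _

theorem mem_iff_decompose_eq_zero {i : ι} {x : M} :
    x ∈ ℳ i ↔ ∀ j ≠ i, (decompose ℳ x j : M) = 0 := by
  simpa using mem_biSup_iff ℳ (T := {i}) (x := x)

theorem _root_.SetLike.IsHomogeneous.eq_iSup_inf {U : Submodule R M}
    (hU : SetLike.IsHomogeneous ℳ U) : U = ⨆ i, U ⊓ ℳ i := by
  classical
  refine le_antisymm (fun x hx => ?_) (iSup_le fun i => inf_le_left)
  rw [← sum_support_decompose ℳ x]
  exact Submodule.sum_mem _ fun i _ => Submodule.mem_iSup_of_mem i ⟨hU i hx, (decompose ℳ x i).2⟩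

end

theorem IsInternal.linearMap_ext {N : Type*} [AddCommMonoid N] [Module R N]
    {ℳ : ι → Submodule R M} (h : IsInternal ℳ) {f g : M →ₗ[R] N}
    (hfg : ∀ i, ∀ x ∈ ℳ i, f x = g x) : f = g := by
  let := h.chooseDecomposition
  exact decompose_lhom_ext ℳ fun i => LinearMap.ext fun x => hfg i x x.2

end Decomposition

section GradingOp

variable {ι K M : Type*} [DecidableEq ι] [Field K] [AddCommGroup M] [Module K M]
  (ℳ : ι → Submodule K M) [Decomposition ℳ]

theorem decompose_eq_zero_of_mem_eigenspace {f : Module.End K M} {c : ι → K}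
    (hf : ∀ i, ∀ x ∈ ℳ i, f x = c i • x) {μ : K} {x : M} (hx : x ∈ f.eigenspace μ) {i : ι}
    (hi : μ ≠ c i) : (decompose ℳ x i : M) = 0 := by
  have h := decompose_map_apply ℳ f (fun j y hy => hf j y hy ▸ (ℳ j).smul_mem _ hy) x i
  rw [Module.End.mem_eigenspace_iff.1 hx, decompose_smul, DirectSum.smul_apply,
    Submodule.coe_smul, hf i _ (decompose ℳ x i).2, ← sub_eq_zero, ← sub_smul] at h
  exact (smul_eq_zero.1 h).resolve_left (sub_ne_zero.2 hi)

variable (d : ι → ℤ)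

noncomputable def gradingOp : Module.End K M :=
  toModule K ι M (fun i => (d i : K) • (ℳ i).subtype) ∘ₗ (decomposeLinearEquiv ℳ).toLinearMap

variable {ℳ d}

theorem gradingOp_apply_of_mem {i : ι} {x : M} (hx : x ∈ ℳ i) :
    gradingOp ℳ d x = (d i : K) • x := by
  simp [gradingOp, decomposeLinearEquiv_apply, decompose_of_mem ℳ hx, ← lof_eq_of K]

theorem gradingOp_mem {i : ι} {x : M} (hx : x ∈ ℳ i) : gradingOp ℳ d x ∈ ℳ i := by
  rw [gradingOp_apply_of_mem hx]
  exact (ℳ i).smul_mem _ hx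

theorem decompose_gradingOp (x : M) (i : ι) :
    (decompose ℳ (gradingOp ℳ d x) i : M) = (d i : K) • (decompose ℳ x i : M) := by
  rw [decompose_map_apply ℳ _ (fun _ _ => gradingOp_mem) x i,
    gradingOp_apply_of_mem (decompose ℳ x i).2]

theorem gradingOp_mem_biSup {T : Set ι} {x : M} (hx : x ∈ ⨆ i ∈ T, ℳ i) :
    gradingOp ℳ d x ∈ ⨆ i ∈ T, ℳ i := by
  rw [mem_biSup_iff] at hx ⊢
  intro i hi
  rw [decompose_gradingOp, hx i hi, smul_zero]

theorem eigenspace_gradingOp [CharZero K] (n : ℤ) :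
    (gradingOp ℳ d).eigenspace (n : K) = ⨆ i ∈ {i | d i = n}, ℳ i := by
  refine le_antisymm (fun x hx => ?_) (iSup₂_le fun i hi x hx => ?_)
  · rw [mem_biSup_iff]
    exact fun i hi => decompose_eq_zero_of_mem_eigenspace ℳ (fun _ _ => gradingOp_apply_of_mem)
      hx (by exact_mod_cast Ne.symm hi)
  · rw [Module.End.mem_eigenspace_iff, gradingOp_apply_of_mem hx, show d i = n from hi]

end GradingOp

theorem isGrading_gradingOp {ι V : Type*} [DecidableEq ι] [AddCommGroup V] [Module ℂ V]
    (ℳ : ι → Submodule ℂ V) [Decomposition ℳ] (d : ι → ℤ) :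
    IsGrading (fun n => ⨆ i ∈ {i | d i ≤ n}, ℳ i) (gradingOp ℳ d) := by
  simp only [IsGrading, eigenspace_gradingOp]
  refine ⟨eq_top_iff.2 ?_, fun n => ⟨?_, ?_⟩⟩
  · rw [← (Decomposition.isInternal ℳ).submodule_iSup_eq_top]
    exact iSup_le fun i => le_iSup_of_le (d i) (le_biSup ℳ rfl)
  · have h : {i | d i ≤ n} = {i | d i = n} ∪ {i | d i ≤ n - 1} := by
      ext i
      simp only [Set.mem_ofPred_eq, Set.mem_union]
      omega
    rw [h, iSup_union]
  · refine (Decomposition.isInternal ℳ).submodule_iSupIndep.disjoint_biSup_biSup ?_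
    exact Set.disjoint_left.2 fun i h1 h2 => by simp only [Set.mem_ofPred_eq] at h1 h2; omega

theorem isRealEnd_gradingOp {ι V : Type*} [DecidableEq ι] [AddCommGroup V] [Module ℂ V]
    {σ : V →ₗ[ℝ] V} (hσ : IsConjugation σ) (ℳ : ι → Submodule ℂ V) [Decomposition ℳ]
    (d : ι → ℤ) (τ : ι → ι) (hστ : ∀ i, ∀ x ∈ ℳ i, σ x ∈ ℳ (τ i)) (hd : ∀ i, d (τ i) = d i) :
    IsRealEnd σ (gradingOp ℳ d) := by
  intro v
  induction v using Decomposition.inductionOn ℳ with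
  | zero => simp
  | @homogeneous i m =>
    rw [gradingOp_apply_of_mem (hστ i m m.2), hd, hσ.map_intCast_smul, hσ.1,
      gradingOp_apply_of_mem m.2]
  | add x y hx hy => simp only [map_add, hx, hy]

end DirectSum

theorem Module.End.isHomogeneous_of_mapsTo {K V : Type*} [Field K] [AddCommGroup V] [Module K V]
    [FiniteDimensional K V] {Y : Module.End K V}
    [Decomposition fun i : ℤ => Y.eigenspace (i : K)] {U : Submodule K V}
    (hU : ∀ v ∈ U, Y v ∈ U) : SetLike.IsHomogeneous (fun i : ℤ => Y.eigenspace (i : K)) U := by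
  have htop : ⨆ μ, Y.genEigenspace μ 1 = ⊤ := eq_top_iff.2 <|
    (Decomposition.isInternal fun i : ℤ => Y.eigenspace (i : K)).submodule_iSup_eq_top.ge.trans
      (iSup_le fun i => le_iSup_of_le (i : K) le_rfl)
  intro i v hv
  rw [Submodule.eq_iSup_inf_genEigenspace 1 hU htop] at hv
  induction hv using Submodule.iSup_induction' with
  | mem μ x hx =>
    by_cases hμ : μ = i
    · subst hμ
      rw [decompose_of_mem_same (fun i : ℤ => Y.eigenspace (i : K)) hx.2]
      exact hx.1
    · rw [decompose_eq_zero_of_mem_eigenspace (fun i : ℤ => Y.eigenspace (i : K))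
        (fun _ _ hy => Module.End.mem_eigenspace_iff.1 hy) hx.2 hμ]
      exact U.zero_mem
  | zero => simp
  | add x y _ _ hx hy => simpa [decompose_add] using U.add_mem hx hy

namespace IsGrading

variable {V : Type*} [AddCommGroup V] [Module ℂ V] {W : ℤ → Submodule ℂ V} {Y : Module.End ℂ V}

theorem isInternal (hY : IsGrading W Y) : IsInternal fun i : ℤ => Y.eigenspace (i : ℂ) :=
  isInternal_submodule_of_iSupIndep_of_iSup_eq_top
    ((Module.End.eigenspaces_iSupIndep Y).comp Int.cast_injective) hY.1

theorem eigenspace_le (hY : IsGrading W Y) (i : ℤ) : Y.eigenspace (i : ℂ) ≤ W i :=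
  (hY.2 i).1 ▸ le_sup_left

theorem monotone (hY : IsGrading W Y) : Monotone W :=
  monotone_int_of_le_succ fun n => by
    simpa using ((hY.2 (n + 1)).1 ▸ le_sup_right : W (n + 1 - 1) ≤ W (n + 1))

theorem eq_biSup_eigenspace (hY : IsGrading W Y) {a : ℤ} (ha : W a = ⊥) (k : ℤ) :
    W k = ⨆ i ∈ Set.Iic k, Y.eigenspace (i : ℂ) := by
  refine le_antisymm ?_ (iSup₂_le fun i hi => (hY.eigenspace_le i).trans (hY.monotone hi))
  rcases le_total k a with hka | hak
  · exact (hY.monotone hka).trans (ha ▸ bot_le)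
  induction k, hak using Int.leInduction with
  | base => exact ha ▸ bot_le
  | succ n _ ih =>
    rw [(hY.2 (n + 1)).1, add_sub_cancel_right]
    refine sup_le (le_biSup (fun i : ℤ => Y.eigenspace (i : ℂ)) (Set.mem_Iic.2 le_rfl)) ?_
    exact ih.trans (biSup_mono fun i hi => Set.Iic_subset_Iic.2 (Int.le_add_one le_rfl) hi)

end IsGrading

section Hodge

variable {V : Type*} [AddCommGroup V] [Module ℂ V] {σ : V →ₗ[ℝ] V}

theorem IsRealEnd.mapsTo_eigenspace (hσ : IsConjugation σ) {Y : Module.End ℂ V}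
    (hY : IsRealEnd σ Y) (i : ℤ) : ∀ v ∈ Y.eigenspace (i : ℂ), σ v ∈ Y.eigenspace (i : ℂ) := by
  intro v hv
  rw [Module.End.mem_eigenspace_iff] at hv ⊢
  rw [← hY (σ v), hσ.1, hv, hσ.map_intCast_smul]

def conjFiltration (hσ : IsConjugation σ) (F : ℤ → Submodule ℂ V) (q : ℤ) : Submodule ℂ V :=
  (F q).map hσ.toSemilinearMap

/-- The paper's `I^{p,q}`. -/
def hodgePiece (hσ : IsConjugation σ) (F W : ℤ → Submodule ℂ V) (p q : ℤ) : Submodule ℂ V :=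
  F p ⊓ conjFiltration hσ F q ⊓ W (p + q)

variable {hσ : IsConjugation σ} {F W : ℤ → Submodule ℂ V}

theorem mem_conjFiltration {q : ℤ} {x : V} :
    x ∈ conjFiltration hσ F q ↔ ∃ y ∈ F q, σ y = x :=
  Submodule.mem_map

theorem map_mem_conjFiltration {q : ℤ} {x : V} (hx : x ∈ F q) : σ x ∈ conjFiltration hσ F q :=
  ⟨x, hx, rfl⟩

theorem conjFiltration_antitone (hF : Antitone F) : Antitone (conjFiltration hσ F) :=
  fun _ _ h => Submodule.map_mono (hF h)

theorem map_mem_hodgePiece (hFW : IsMHS σ F W) {p q : ℤ} {v : V}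
    (hv : v ∈ hodgePiece hσ F W p q) : σ v ∈ hodgePiece hσ F W q p := by
  obtain ⟨⟨hvF, hvF'⟩, hvW⟩ := hv
  obtain ⟨y, hy, rfl⟩ := mem_conjFiltration.1 hvF'
  refine ⟨⟨by rwa [hσ.1], map_mem_conjFiltration hvF⟩, ?_⟩
  rw [add_comm]
  exact hFW.2.1 _ _ hvW

end Hodge

structure IsSplitting {V : Type*} [AddCommGroup V] [Module ℂ V] (σ : V →ₗ[ℝ] V)
    (F W E : ℤ → Submodule ℂ V) [Decomposition E] : Prop where
  weight_eq : ∀ k, W k = ⨆ i ∈ Set.Iic k, E i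
  isHomogeneous : ∀ p, SetLike.IsHomogeneous E (F p)
  conj_mem : ∀ k, ∀ v ∈ E k, σ v ∈ E k

theorem IsGrading.isSplitting {V : Type*} [AddCommGroup V] [Module ℂ V] [FiniteDimensional ℂ V]
    {σ : V →ₗ[ℝ] V} (hσ : IsConjugation σ) {F W : ℤ → Submodule ℂ V} (hW : FinIncrFil W)
    {Y : Module.End ℂ V} [Decomposition fun i : ℤ => Y.eigenspace (i : ℂ)] (hY : IsGrading W Y)
    (hre : IsRealEnd σ Y) (hYF : ∀ p, ∀ v ∈ F p, Y v ∈ F p) :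
    IsSplitting σ F W fun i : ℤ => Y.eigenspace (i : ℂ) where
  weight_eq := hY.eq_biSup_eigenspace hW.2.1.choose_spec
  isHomogeneous p := Module.End.isHomogeneous_of_mapsTo (hYF p)
  conj_mem := hre.mapsTo_eigenspace hσ

namespace IsSplitting

variable {V : Type*} [AddCommGroup V] [Module ℂ V] {σ : V →ₗ[ℝ] V} (hσ : IsConjugation σ)
  {F W E : ℤ → Submodule ℂ V} [Decomposition E]

theorem le_weight (hE : IsSplitting σ F W E) (k : ℤ) : E k ≤ W k :=
  (hE.weight_eq k).ge.trans' (le_biSup E (Set.mem_Iic.2 le_rfl))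

theorem decompose_eq_zero (hE : IsSplitting σ F W E) {k i : ℤ} {x : V} (hx : x ∈ W k)
    (hki : k < i) : (decompose E x i : V) = 0 :=
  (mem_biSup_iff E).1 (hE.weight_eq k ▸ hx) i (by simpa using hki)

theorem isHomogeneous_conjFiltration (hE : IsSplitting σ F W E) (q : ℤ) :
    SetLike.IsHomogeneous E (conjFiltration hσ F q) := by
  intro i x hx
  obtain ⟨y, hy, rfl⟩ := mem_conjFiltration.1 hx
  rw [decompose_map_apply E σ hE.conj_mem]
  exact map_mem_conjFiltration (hE.isHomogeneous q i hy)

theorem disjoint_inf_conjFiltration (hE : IsSplitting σ F W E) (hFW : IsMHS σ F W) (k p : ℤ) :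
    Disjoint (F p ⊓ E k) (conjFiltration hσ F (k - p + 1)) := by
  rw [Submodule.disjoint_def]
  rintro _ ⟨hvF, hvE⟩ hv
  obtain ⟨b, hb, rfl⟩ := mem_conjFiltration.1 hv
  have hbE : b ∈ E k := by simpa [hσ.1] using hE.conj_mem k _ hvE
  have hW : σ b ∈ W (k - 1) :=
    (hFW.2.2.2 k p).2 _ ⟨hvF, hE.le_weight k hvE⟩ b ⟨hb, hE.le_weight k hbE⟩ (by simp)
  simpa [decompose_of_mem_same E hvE] using hE.decompose_eq_zero hW (sub_one_lt k)

theorem le_sup_conjFiltration (hE : IsSplitting σ F W E) (hFW : IsMHS σ F W) (k p : ℤ) :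
    E k ≤ (F p ⊓ E k) ⊔ (conjFiltration hσ F (k - p + 1) ⊓ E k) := by
  intro v hv
  obtain ⟨a, ⟨ha, -⟩, b, ⟨hb, -⟩, hab⟩ := (hFW.2.2.2 k p).1 v (hE.le_weight k hv)
  have h := hE.decompose_eq_zero hab (sub_one_lt k)
  rw [decompose_sub, decompose_sub, DirectSum.sub_apply, DirectSum.sub_apply, Submodule.coe_sub,
    Submodule.coe_sub, decompose_of_mem_same E hv, decompose_map_apply E σ hE.conj_mem, sub_sub,
    sub_eq_zero] at h
  rw [h]
  exact Submodule.add_mem_sup ⟨hE.isHomogeneous p k ha, (decompose E a k).2⟩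
    ⟨map_mem_conjFiltration (hE.isHomogeneous _ k hb), hE.conj_mem k _ (decompose E b k).2⟩

theorem hodgePiece_le (hE : IsSplitting σ F W E) (hFW : IsMHS σ F W) (p q : ℤ) :
    hodgePiece hσ F W p q ≤ E (p + q) := by
  rintro v ⟨⟨hvF, hvF'⟩, hvW⟩
  rw [mem_iff_decompose_eq_zero]
  intro j hj
  rcases lt_or_gt_of_ne hj with hlt | hgt
  · refine Submodule.disjoint_def.1 (hE.disjoint_inf_conjFiltration hσ hFW j p) _
      ⟨hE.isHomogeneous p j hvF, (decompose E v j).2⟩ ?_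
    exact conjFiltration_antitone hFW.2.2.1.1 (by omega)
      (hE.isHomogeneous_conjFiltration hσ q j hvF')
  · exact hE.decompose_eq_zero hvW hgt

theorem inf_le_hodgePiece_sup (hE : IsSplitting σ F W E) (hFW : IsMHS σ F W) (k p : ℤ) :
    F p ⊓ E k ≤ hodgePiece hσ F W p (k - p) ⊔ (F (p + 1) ⊓ E k) := by
  rintro _ ⟨hvF, hvE⟩
  obtain ⟨a, ha, y, hy, rfl⟩ :=
    Submodule.mem_sup.1 (hE.le_sup_conjFiltration hσ hFW k (p + 1) hvE)
  have hyF : y ∈ F p := by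
    simpa using sub_mem hvF (hFW.2.2.1.1 (Int.le_add_one le_rfl) ha.1)
  rw [show k - (p + 1) + 1 = k - p by ring] at hy
  refine add_comm y a ▸ Submodule.add_mem_sup ⟨⟨hyF, hy.1⟩, ?_⟩ ha
  rw [add_sub_cancel]
  exact hE.le_weight k hy.2

theorem inf_le_iSup_hodgePiece (hE : IsSplitting σ F W E) (hFW : IsMHS σ F W) (k p : ℤ) :
    F p ⊓ E k ≤ ⨆ (r : ℤ) (_ : p ≤ r), hodgePiece hσ F W r (k - r) := by
  obtain ⟨b, hb⟩ := hFW.2.2.1.2.2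
  induction p using Int.inductionOn' (b := b) with
  | zero => exact hb ▸ inf_le_left.trans bot_le
  | succ n hn _ =>
    have hF : F (n + 1) = ⊥ := eq_bot_iff.2 (hb ▸ hFW.2.2.1.1 (hn.trans (Int.le_add_one le_rfl)))
    simp [hF]
  | pred n _ ih =>
    refine (hE.inf_le_hodgePiece_sup hσ hFW k (n - 1)).trans (sup_le ?_ ?_)
    · exact le_iSup₂_of_le (n - 1) le_rfl le_rfl
    · rw [sub_add_cancel]
      exact ih.trans (biSup_mono fun r hr => (Int.sub_one_lt_iff.2 hr).le)

theorem le_iSup_hodgePiece (hE : IsSplitting σ F W E) (hFW : IsMHS σ F W) (k : ℤ) :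
    E k ≤ ⨆ r, hodgePiece hσ F W r (k - r) := by
  obtain ⟨a, ha⟩ := hFW.2.2.1.2.1
  calc E k = F a ⊓ E k := by rw [ha, top_inf_eq]
    _ ≤ ⨆ (r) (_ : a ≤ r), hodgePiece hσ F W r (k - r) := hE.inf_le_iSup_hodgePiece hσ hFW k a
    _ ≤ ⨆ r, hodgePiece hσ F W r (k - r) := iSup_mono fun r => iSup_const_le

theorem disjoint_hodgePiece_sup (hE : IsSplitting σ F W E) (hFW : IsMHS σ F W) (p q : ℤ) :
    Disjoint (hodgePiece hσ F W p q)
      ((F (p + 1) ⊓ E (p + q)) ⊔ (conjFiltration hσ F (q + 1) ⊓ E (p + q))) := by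
  rw [Submodule.disjoint_def]
  rintro _ ⟨⟨hvF, hvF'⟩, -⟩ hv
  obtain ⟨x, hx, y, hy, rfl⟩ := Submodule.mem_sup.1 hv
  obtain rfl : x = 0 := by
    refine Submodule.disjoint_def.1 (hE.disjoint_inf_conjFiltration hσ hFW (p + q) (p + 1)) x hx ?_
    rw [show p + q - (p + 1) + 1 = q by ring]
    simpa using sub_mem hvF' (conjFiltration_antitone hFW.2.2.1.1 (Int.le_add_one le_rfl) hy.1)
  rw [zero_add] at hvF ⊢
  refine Submodule.disjoint_def.1 (hE.disjoint_inf_conjFiltration hσ hFW (p + q) p) y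
    ⟨hvF, hy.2⟩ ?_
  rw [show p + q - p + 1 = q + 1 by ring]
  exact hy.1

theorem decompose_mem_sup_of_mem_iSup (hE : IsSplitting σ F W E) (hFW : IsMHS σ F W) {p q : ℤ}
    {x : V} (hx : x ∈ ⨆ (j : ℤ × ℤ) (_ : j ≠ (p, q)), hodgePiece hσ F W j.1 j.2) :
    (decompose E x (p + q) : V) ∈
      (F (p + 1) ⊓ E (p + q)) ⊔ (conjFiltration hσ F (q + 1) ⊓ E (p + q)) := by
  rw [iSup_subtype'] at hx
  induction hx using Submodule.iSup_induction' with
  | mem j x hx =>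
    obtain ⟨⟨r, s⟩, hrs⟩ := j
    replace hx : x ∈ hodgePiece hσ F W r s := hx
    have hxE := hE.hodgePiece_le hσ hFW r s hx
    by_cases h : r + s = p + q
    · rw [h] at hxE
      rw [decompose_of_mem_same E hxE]
      rcases le_or_gt r p with hr | hr
      · have hr : r < p := hr.lt_of_ne fun h' => hrs (Prod.ext h' (by omega))
        exact Submodule.mem_sup_right
          ⟨conjFiltration_antitone hFW.2.2.1.1 (by omega) hx.1.2, hxE⟩
      · exact Submodule.mem_sup_left ⟨hFW.2.2.1.1 hr hx.1.1, hxE⟩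
    · rw [decompose_of_mem_ne E hxE h]
      exact zero_mem _
  | zero => simp
  | add x y _ _ hx hy => simpa [decompose_add] using add_mem hx hy

theorem iSupIndep_hodgePiece (hE : IsSplitting σ F W E) (hFW : IsMHS σ F W) :
    iSupIndep fun pq : ℤ × ℤ => hodgePiece hσ F W pq.1 pq.2 := by
  rintro ⟨p, q⟩
  rw [Submodule.disjoint_def]
  intro v hv hv'
  refine Submodule.disjoint_def.1 (hE.disjoint_hodgePiece_sup hσ hFW p q) v hv ?_
  simpa [decompose_of_mem_same E (hE.hodgePiece_le hσ hFW p q hv)] using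
    hE.decompose_mem_sup_of_mem_iSup hσ hFW hv'

theorem weight_eq_iSup_hodgePiece (hE : IsSplitting σ F W E) (hFW : IsMHS σ F W) (k : ℤ) :
    W k = ⨆ (r : ℤ) (s : ℤ) (_ : r + s ≤ k), hodgePiece hσ F W r s := by
  refine le_antisymm ?_ (iSup_le fun r => iSup_le fun s => iSup_le fun hrs =>
    inf_le_right.trans (hFW.1.1 hrs))
  rw [hE.weight_eq k]
  refine iSup₂_le fun i hi => (hE.le_iSup_hodgePiece hσ hFW i).trans ?_
  exact iSup_le fun r => le_iSup_of_le r <| le_iSup_of_le (i - r) <|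
    le_iSup_of_le (by simpa using hi) le_rfl

theorem filtration_eq_iSup_hodgePiece (hE : IsSplitting σ F W E) (hFW : IsMHS σ F W) (p : ℤ) :
    F p = ⨆ (r : ℤ) (_ : p ≤ r) (s : ℤ), hodgePiece hσ F W r s := by
  refine le_antisymm ?_ (iSup₂_le fun r hr => iSup_le fun s =>
    inf_le_left.trans (inf_le_left.trans (hFW.2.2.1.1 hr)))
  calc F p = ⨆ k, F p ⊓ E k := SetLike.IsHomogeneous.eq_iSup_inf E (hE.isHomogeneous p)
    _ ≤ _ := iSup_le fun k => (hE.inf_le_iSup_hodgePiece hσ hFW k p).trans <|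
      iSup₂_le fun r hr => le_iSup₂_of_le r hr (le_iSup_of_le (k - r) le_rfl)

theorem isInternal_hodgePiece (hE : IsSplitting σ F W E) (hFW : IsMHS σ F W) :
    IsInternal fun pq : ℤ × ℤ => hodgePiece hσ F W pq.1 pq.2 := by
  refine isInternal_submodule_of_iSupIndep_of_iSup_eq_top (hE.iSupIndep_hodgePiece hσ hFW)
    (eq_top_iff.2 ?_)
  obtain ⟨b, hb⟩ := hFW.1.2.2
  rw [← hb, hE.weight_eq_iSup_hodgePiece hσ hFW b]
  exact iSup_le fun r => iSup_le fun s => iSup_le fun _ =>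
    le_iSup (fun pq : ℤ × ℤ => hodgePiece hσ F W pq.1 pq.2) (r, s)

end IsSplitting

theorem exists_grading_of_isInternal {V : Type*} [AddCommGroup V] [Module ℂ V]
    {σ : V →ₗ[ℝ] V} (hσ : IsConjugation σ) {F W : ℤ → Submodule ℂ V}
    {I : ℤ → ℤ → Submodule ℂ V} (hIσ : ∀ p q, ∀ v ∈ I p q, σ v ∈ I q p)
    (hI : IsInternal fun pq : ℤ × ℤ => I pq.1 pq.2)
    (hF : ∀ p, F p = ⨆ (r : ℤ) (_ : p ≤ r) (s : ℤ), I r s)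
    (hW : ∀ k, W k = ⨆ (r : ℤ) (s : ℤ) (_ : r + s ≤ k), I r s) :
    ∃ Y : Module.End ℂ V, IsGrading W Y ∧ IsRealEnd σ Y ∧ ∀ p, ∀ v ∈ F p, Y v ∈ F p := by
  let := hI.chooseDecomposition
  refine ⟨gradingOp _ fun pq => pq.1 + pq.2, ?_,
    isRealEnd_gradingOp hσ _ _ Prod.swap (fun pq => hIσ pq.1 pq.2) fun pq => add_comm _ _,
    fun p v hv => ?_⟩
  · convert isGrading_gradingOp (fun pq : ℤ × ℤ => I pq.1 pq.2) _
    rw [hW]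
    simp only [Set.mem_ofPred_eq, iSup_prod]
  · have hF' : F p = ⨆ i ∈ {i : ℤ × ℤ | p ≤ i.1}, I i.1 i.2 := by
      simp only [hF, Set.mem_ofPred_eq, iSup_prod]
      exact iSup_congr fun r => iSup_comm
    rw [hF'] at hv ⊢
    exact gradingOp_mem_biSup hv

/-- for a mixed Hodge structure `(F, W)` and
`I^{p,q} = F^p ∩ σ(F^q) ∩ W_{p+q}`, the following are equivalent:
(i) there is a real grading of `W` preserving `F`;
(ii) `V = ⊕ I^{p,q}`, `F^p = ⊕_{r ≥ p, s} I^{r,s}` and `W_k = ⊕_{r+s ≤ k} I^{r,s}`.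
Moreover, in that case the grading in (i) is unique and acts as multiplication by
`p + q` on `I^{p,q}`. -/
theorem zero_loci_stmt6 {V : Type*} [AddCommGroup V] [Module ℂ V] [FiniteDimensional ℂ V]
    (σ : V →ₗ[ℝ] V) (hσ : IsConjugation σ)
    (F W : ℤ → Submodule ℂ V) (hFW : IsMHS σ F W)
    (I : ℤ → ℤ → Submodule ℂ V)
    (hI : ∀ p q : ℤ,
      (I p q : Set V) = (F p : Set V) ∩ (⇑σ '' (F q : Set V)) ∩ (W (p + q) : Set V)) :
    ((∃ Y : Module.End ℂ V,
        IsGrading W Y ∧ IsRealEnd σ Y ∧ ∀ p : ℤ, ∀ v ∈ F p, Y v ∈ F p) ↔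
      (DirectSum.IsInternal (fun pq : ℤ × ℤ => I pq.1 pq.2) ∧
        (∀ p : ℤ, F p = ⨆ (r : ℤ) (_ : p ≤ r) (s : ℤ), I r s) ∧
        (∀ k : ℤ, W k = ⨆ (r : ℤ) (s : ℤ) (_ : r + s ≤ k), I r s))) ∧
    ((∃ Y : Module.End ℂ V,
        IsGrading W Y ∧ IsRealEnd σ Y ∧ ∀ p : ℤ, ∀ v ∈ F p, Y v ∈ F p) →
      (∃! Y : Module.End ℂ V,
        IsGrading W Y ∧ IsRealEnd σ Y ∧ ∀ p : ℤ, ∀ v ∈ F p, Y v ∈ F p) ∧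
      ∀ Y : Module.End ℂ V,
        (IsGrading W Y ∧ IsRealEnd σ Y ∧ (∀ p : ℤ, ∀ v ∈ F p, Y v ∈ F p)) →
        ∀ p q : ℤ, ∀ v ∈ I p q, Y v = ((p + q : ℤ) : ℂ) • v) := by
  obtain rfl : I = hodgePiece hσ F W := by
    ext p q : 2
    exact SetLike.coe_injective (by simpa [hodgePiece, conjFiltration] using hI p q)
  have hact : ∀ Y : Module.End ℂ V,
      IsGrading W Y ∧ IsRealEnd σ Y ∧ (∀ p : ℤ, ∀ v ∈ F p, Y v ∈ F p) →
      ∀ p q : ℤ, ∀ v ∈ hodgePiece hσ F W p q, Y v = ((p + q : ℤ) : ℂ) • v := by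
    rintro Y ⟨hY, hre, hYF⟩ p q v hv
    let := hY.isInternal.chooseDecomposition
    exact Module.End.mem_eigenspace_iff.1
      ((hY.isSplitting hσ hFW.1 hre hYF).hodgePiece_le hσ hFW p q hv)
  refine ⟨⟨?_, ?_⟩, ?_⟩
  · rintro ⟨Y, hY, hre, hYF⟩
    let := hY.isInternal.chooseDecomposition
    have hE := hY.isSplitting hσ hFW.1 hre hYF
    exact ⟨hE.isInternal_hodgePiece hσ hFW, hE.filtration_eq_iSup_hodgePiece hσ hFW,
      hE.weight_eq_iSup_hodgePiece hσ hFW⟩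
  · rintro ⟨hInt, hF, hW⟩
    exact exists_grading_of_isInternal hσ (I := hodgePiece hσ F W)
      (fun _ _ _ => map_mem_hodgePiece hFW) hInt hF hW
  · rintro ⟨Y, hY⟩
    refine ⟨⟨Y, hY, fun Y' hY' => ?_⟩, hact⟩
    let := hY.1.isInternal.chooseDecomposition
    refine ((hY.1.isSplitting hσ hFW.1 hY.2.1 hY.2.2).isInternal_hodgePiece hσ hFW).linearMap_ext ?_
    rintro ⟨p, q⟩ v hv
    rw [hact Y hY p q v hv, hact Y' hY' p q v hv]
end

section
/- Let (F,W) be a mixed Hodge structure on V with Deligne bigrading {I^{p,q}}, and let λ ∈ Λ^{−1,−1}_{(F,W)}. Then (e^{λ}·F, W), where (e^{λ}·F)^p = e^{λ}(F^p), is a mixed Hodge structure, its Deligne bigrading is {e^{λ}(I^{p,q})}, and consequently its Deligne grading is Y_{(e^{λ}·F,W)} = e^{λ} Y_{(F,W)} e^{−λ}. -/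
/-- `I` is a Deligne bigrading of the mixed Hodge structure `(F, W)`:
`V = ⊕_{p,q} I^{p,q}`, with (a) `F^p = ⊕_{r ≥ p, s} I^{r,s}`,
(b) `W_k = ⊕_{r+s ≤ k} I^{r,s}`, and
(c) `σ(I^{p,q}) ⊆ I^{q,p} + ⊕_{r<q, s<p} I^{r,s}`. -/
def IsDeligneBigrading {V : Type*} [AddCommGroup V] [Module ℂ V] (σ : V →ₗ[ℝ] V)
    (F W : ℤ → Submodule ℂ V) (I : ℤ → ℤ → Submodule ℂ V) : Prop :=
  DirectSum.IsInternal (fun pq : ℤ × ℤ => I pq.1 pq.2) ∧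
  (∀ p : ℤ, F p = ⨆ (r : ℤ) (_ : p ≤ r) (s : ℤ), I r s) ∧
  (∀ k : ℤ, W k = ⨆ (r : ℤ) (s : ℤ) (_ : r + s ≤ k), I r s) ∧
  (∀ p q : ℤ, ∀ v ∈ I p q,
    σ v ∈ I q p ⊔ ⨆ (r : ℤ) (_ : r < q) (s : ℤ) (_ : s < p), I r s)

/-- The endomorphism `Y` acts as multiplication by `p + q` on each `I^{p,q}`
(this characterizes the Deligne grading of a bigraded mixed Hodge structure). -/
def ActsAsDeligneGrading {V : Type*} [AddCommGroup V] [Module ℂ V]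
    (I : ℤ → ℤ → Submodule ℂ V) (Y : Module.End ℂ V) : Prop :=
  ∀ p q : ℤ, ∀ v ∈ I p q, Y v = ((p + q : ℤ) : ℂ) • v

/-- The subalgebra `Λ^{-1,-1}_{(F,W)}` relative to a bigrading `I`:
endomorphisms `X` with `X(I^{p,q}) ⊆ ⊕_{r<p, s<q} I^{r,s}`. -/
def MemLambdaMM {V : Type*} [AddCommGroup V] [Module ℂ V]
    (I : ℤ → ℤ → Submodule ℂ V) (X : Module.End ℂ V) : Prop :=
  ∀ p q : ℤ, ∀ v ∈ I p q, X v ∈ ⨆ (r : ℤ) (_ : r < p) (s : ℤ) (_ : s < q), I r s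

/-- The exponential of a nilpotent endomorphism of a finite-dimensional complex vector
space, written as the (finite) sum `Σ_{j ≤ dim V} X^j / j!`. -/
noncomputable def expEnd {V : Type*} [AddCommGroup V] [Module ℂ V] [FiniteDimensional ℂ V]
    (X : Module.End ℂ V) : Module.End ℂ V :=
  ∑ j ∈ Finset.range (Module.finrank ℂ V + 1), ((j.factorial : ℂ))⁻¹ • X ^ j

/-!
Write `L^{p,q} = ⊕_{r<p, s<q} I^{r,s}`. An element `λ ∈ Λ^{-1,-1}` maps `I^{p,q}` into `L^{p,q}`
and preserves `L^{p,q}`, so it lowers weights by two (hence is nilpotent) and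
`e^λ u ≡ u mod L^{p,q}` for `u ∈ I^{p,q}`. Therefore `e^λ` fixes every `W_k` and every
`I^{q,p} + L^{q,p}`, and
`σ(e^λ u) = σ u + σ(e^λ u - u) ∈ I^{q,p} + L^{q,p} = e^λ(I^{q,p} + L^{q,p})`:
the spaces `e^λ I^{p,q}` satisfy Deligne's conditions for `(e^λ F, W)`. Any bigrading satisfying
these conditions splits `Gr^W_k = F^p ⊕ σ F^{k-p+1}`, so `(e^λ F, W)` is a mixed Hodge structure,
and the grading acting by `p + q` is transported by conjugation with `e^λ`.
-/

open Module

section Exponential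

variable {V : Type*} [AddCommGroup V] [Module ℂ V] [FiniteDimensional ℂ V]

lemma pow_finrank_eq_zero_of_isNilpotent {X : Module.End ℂ V} (hX : IsNilpotent X) :
    X ^ finrank ℂ V = 0 := by
  simpa [hX.charpoly_eq_X_pow_finrank] using X.aeval_self_charpoly

lemma expEnd_mul_expEnd_neg {X : Module.End ℂ V} (hX : IsNilpotent X) :
    expEnd X * expEnd (-X) = 1 := by
  let _ : Module ℚ (Module.End ℂ V) := Module.compHom _ (algebraMap ℚ ℂ)
  have expEnd_eq_exp : ∀ Y : Module.End ℂ V, IsNilpotent Y → expEnd Y = IsNilpotent.exp Y := by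
    intro Y hY
    rw [IsNilpotent.exp_eq_sum (k := finrank ℂ V + 1)
      (by rw [pow_succ, pow_finrank_eq_zero_of_isNilpotent hY, zero_mul])]
    refine Finset.sum_congr rfl fun j _ => ?_
    change _ = algebraMap ℚ ℂ _ • (Y ^ j)
    simp
  rw [expEnd_eq_exp X hX, expEnd_eq_exp (-X) hX.neg, IsNilpotent.exp_mul_exp_neg_self hX]

noncomputable def expEquiv {X : Module.End ℂ V} (hX : IsNilpotent X) : V ≃ₗ[ℂ] V :=
  LinearEquiv.ofLinearMap (expEnd X) (expEnd (-X)) (expEnd_mul_expEnd_neg hX)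
    (by simpa using expEnd_mul_expEnd_neg hX.neg : expEnd (-X) * expEnd X = 1)

lemma expEnd_apply_sub_mem {X : Module.End ℂ V} {U : Submodule ℂ V} (hU : U ≤ U.comap X)
    {v : V} (hv : X v ∈ U) : expEnd X v - v ∈ U := by
  rw [expEnd, Finset.sum_range_succ']
  simp only [pow_zero, Nat.factorial_zero, Nat.cast_one, inv_one, one_smul, LinearMap.add_apply,
    Module.End.one_apply, add_sub_cancel_right, LinearMap.sum_apply, LinearMap.smul_apply]
  refine Submodule.sum_mem _ fun j _ => U.smul_mem _ ?_
  rw [pow_succ, Module.End.mul_apply]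
  exact Module.End.pow_apply_mem_of_forall_mem (p := U) j (fun w hw => hU hw) _ hv

lemma expEnd_apply_mem {X : Module.End ℂ V} {U : Submodule ℂ V} (hU : U ≤ U.comap X)
    {v : V} (hv : v ∈ U) : expEnd X v ∈ U := by
  simpa using add_mem (expEnd_apply_sub_mem hU (hU hv)) hv

lemma map_expEnd_eq_self {X : Module.End ℂ V} (hX : IsNilpotent X) {U : Submodule ℂ V}
    (hU : U ≤ U.comap X) : U.map (expEnd X) = U := by
  refine le_antisymm (Submodule.map_le_iff_le_comap.mpr fun v hv => expEnd_apply_mem hU hv)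
    fun v hv => ⟨expEnd (-X) v, expEnd_apply_mem (fun w hw => ?_) hv,
      (expEquiv hX).apply_symm_apply v⟩
  simpa using U.neg_mem (hU hw)

end Exponential

lemma DirectSum.IsInternal.map_linearEquiv {ι R M N : Type*} [DecidableEq ι] [Ring R]
    [AddCommGroup M] [Module R M] [AddCommGroup N] [Module R N] {A : ι → Submodule R M}
    (h : DirectSum.IsInternal A) (e : M ≃ₗ[R] N) :
    DirectSum.IsInternal fun i => (A i).map (e : M →ₗ[R] N) := by
  rw [DirectSum.isInternal_submodule_iff_iSupIndep_and_iSup_eq_top] at h ⊢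
  refine ⟨h.1.map_orderIso (Submodule.orderIsoMapComap e), ?_⟩
  rw [← Submodule.map_iSup, h.2, Submodule.map_top, LinearEquiv.range]

lemma iSupIndep.biSup_inf_biSup {ι α : Type*} [CompleteLattice α] [IsModularLattice α]
    [IsCompactlyGenerated α] {f : ι → α} (hf : iSupIndep f) (s t : Set ι) :
    (⨆ i ∈ s, f i) ⊓ (⨆ i ∈ t, f i) = ⨆ i ∈ s ∩ t, f i := by
  refine le_antisymm ?_ (le_inf (biSup_mono Set.inter_subset_left)
    (biSup_mono Set.inter_subset_right))
  have hs : (⨆ i ∈ s, f i) = (⨆ i ∈ s ∩ t, f i) ⊔ ⨆ i ∈ s \ t, f i := by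
    rw [← iSup_union, Set.inter_union_sdiff]
  rw [hs, sup_inf_assoc_of_le _ (biSup_mono Set.inter_subset_right),
    disjoint_iff.mp (hf.disjoint_biSup_biSup Set.disjoint_sdiff_left), sup_bot_eq]

section Bigrading

variable {V : Type*} [AddCommGroup V] [Module ℂ V] {σ : V →ₗ[ℝ] V} {F W : ℤ → Submodule ℂ V}

def IsConjugation.toSemilinear (hσ : IsConjugation σ) : V →ₗ⋆[ℂ] V where
  toFun := σ
  map_add' := σ.map_add
  map_smul' := hσ.2

@[simp]
lemma IsConjugation.toSemilinear_apply (hσ : IsConjugation σ) (v : V) :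
    hσ.toSemilinear v = σ v :=
  rfl

lemma FinDecrFil.map_of_surjective (hF : FinDecrFil F) {e : V →ₗ[ℂ] V}
    (he : Function.Surjective e) :
    FinDecrFil fun p => (F p).map e := by
  obtain ⟨hanti, ⟨a, ha⟩, ⟨b, hb⟩⟩ := hF
  refine ⟨fun i j hij => Submodule.map_mono (hanti hij), ⟨a, ?_⟩, ⟨b, ?_⟩⟩
  · simp only [ha, Submodule.map_top, LinearMap.range_eq_top.mpr he]
  · simp only [hb, Submodule.map_bot]

lemma FinIncrFil.isNilpotent (hW : FinIncrFil W) {X : Module.End ℂ V}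
    (hX : ∀ k, W k ≤ (W (k - 1)).comap X) : IsNilpotent X := by
  obtain ⟨hmono, ⟨a, ha⟩, ⟨b, hb⟩⟩ := hW
  have hpow : ∀ m : ℕ, ∀ v, (X ^ m) v ∈ W (b - m) := by
    intro m
    induction m with
    | zero => simp [hb]
    | succ m ih =>
      intro v
      rw [pow_succ', Module.End.mul_apply, Nat.cast_succ, ← sub_sub]
      exact hX _ (ih v)
  refine ⟨(b - a).toNat, LinearMap.ext fun v => ?_⟩
  simpa [ha] using hmono (show b - ((b - a).toNat : ℤ) ≤ a by omega) (hpow (b - a).toNat v)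

def spanOn (I : ℤ → ℤ → Submodule ℂ V) (A : Set (ℤ × ℤ)) : Submodule ℂ V :=
  ⨆ pq ∈ A, I pq.1 pq.2

variable {I : ℤ → ℤ → Submodule ℂ V}

lemma le_spanOn {A : Set (ℤ × ℤ)} {r s : ℤ} (h : (r, s) ∈ A) : I r s ≤ spanOn I A :=
  le_biSup (fun pq : ℤ × ℤ => I pq.1 pq.2) h

lemma spanOn_le {A : Set (ℤ × ℤ)} {U : Submodule ℂ V} (h : ∀ pq ∈ A, I pq.1 pq.2 ≤ U) :
    spanOn I A ≤ U :=
  iSup₂_le h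

lemma spanOn_mono {A B : Set (ℤ × ℤ)} (h : A ⊆ B) : spanOn I A ≤ spanOn I B :=
  biSup_mono h

lemma iSup_lt_lt_eq_spanOn (p q : ℤ) :
    (⨆ (r : ℤ) (_ : r < p) (s : ℤ) (_ : s < q), I r s) = spanOn I {pq | pq.1 < p ∧ pq.2 < q} := by
  simp [spanOn, iSup_prod, iSup_and, iSup_comm (ι := _ < p)]

namespace IsDeligneBigrading

lemma hodge_eq_spanOn (hI : IsDeligneBigrading σ F W I) (p : ℤ) :
    F p = spanOn I {pq | p ≤ pq.1} := by
  simp [hI.2.1 p, spanOn, iSup_prod, iSup_comm (ι := p ≤ _)]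

lemma weight_eq_spanOn (hI : IsDeligneBigrading σ F W I) (k : ℤ) :
    W k = spanOn I {pq | pq.1 + pq.2 ≤ k} := by
  simp [hI.2.2.1 k, spanOn, iSup_prod]

lemma spanOn_inf_spanOn (hI : IsDeligneBigrading σ F W I) (A B : Set (ℤ × ℤ)) :
    spanOn I A ⊓ spanOn I B = spanOn I (A ∩ B) :=
  hI.1.submodule_iSupIndep.biSup_inf_biSup A B

lemma conj_mem_spanOn (hσ : IsConjugation σ) (hI : IsDeligneBigrading σ F W I)
    {A B : Set (ℤ × ℤ)}
    (hAB : ∀ pq ∈ A, (pq.2, pq.1) ∈ B ∧ ∀ r < pq.2, ∀ s < pq.1, (r, s) ∈ B) {v : V}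
    (hv : v ∈ spanOn I A) : σ v ∈ spanOn I B := by
  refine spanOn_le (U := (spanOn I B).comap hσ.toSemilinear) (fun pq hpq w hw => ?_) hv
  have hσw := hI.2.2.2 _ _ w hw
  rw [iSup_lt_lt_eq_spanOn] at hσw
  have hle : I pq.2 pq.1 ⊔ spanOn I {rs | rs.1 < pq.2 ∧ rs.2 < pq.1} ≤ spanOn I B :=
    sup_le (le_spanOn (hAB pq hpq).1) (spanOn_mono fun rs h => (hAB pq hpq).2 _ h.1 _ h.2)
  exact hle hσw

lemma conj_mem_weight (hσ : IsConjugation σ) (hI : IsDeligneBigrading σ F W I) {k : ℤ} {v : V}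
    (hv : v ∈ W k) : σ v ∈ W k := by
  rw [hI.weight_eq_spanOn] at hv ⊢
  exact hI.conj_mem_spanOn hσ (fun pq h => ⟨by grind, fun r hr s hs => by grind⟩) hv

lemma le_hodge (hI : IsDeligneBigrading σ F W I) {p r : ℤ} (s : ℤ) (h : p ≤ r) : I r s ≤ F p :=
  hI.hodge_eq_spanOn p ▸ le_spanOn h

lemma le_weight (hI : IsDeligneBigrading σ F W I) {k r s : ℤ} (h : r + s ≤ k) : I r s ≤ W k :=
  hI.weight_eq_spanOn k ▸ le_spanOn h

lemma weight_le_hodge_sup_conj_hodge (hσ : IsConjugation σ) (hI : IsDeligneBigrading σ F W I)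
    (k p : ℤ) :
    W k ≤ (F p ⊓ W k) ⊔ (F (k - p + 1) ⊓ W k).map hσ.toSemilinear ⊔ W (k - 1) := by
  refine (hI.weight_eq_spanOn k).le.trans (spanOn_le ?_)
  rintro ⟨r, s⟩ (hrs : r + s ≤ k) v hv
  rcases hrs.lt_or_eq with hlt | rfl
  · exact Submodule.mem_sup_right (hI.le_weight (by omega) hv)
  by_cases hp : p ≤ r
  · exact Submodule.mem_sup_left
      (Submodule.mem_sup_left ⟨hI.le_hodge s hp hv, hI.le_weight le_rfl hv⟩)
  -- for `r < p`, `v` is the conjugate of the `I^{s,r}`-component of `σ v`, modulo `W_{k-1}`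
  obtain ⟨b, hb, c, hc, hbc⟩ := Submodule.mem_sup.mp (hI.2.2.2 r s v hv)
  have hv : v = σ b + σ c := by rw [← map_add, hbc, hσ.1]
  rw [iSup_lt_lt_eq_spanOn] at hc
  have hcW : c ∈ W (r + s - 1) :=
    hI.weight_eq_spanOn _ ▸ spanOn_mono (fun pq (h : pq.1 < s ∧ pq.2 < r) => by grind) hc
  rw [hv]
  refine add_mem (Submodule.mem_sup_left (Submodule.mem_sup_right ⟨b, ⟨?_, ?_⟩, rfl⟩))
    (Submodule.mem_sup_right (hI.conj_mem_weight hσ hcW))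
  · exact hI.le_hodge r (by omega) hb
  · exact hI.le_weight (by omega) hb

lemma exists_hodge_decomposition (hσ : IsConjugation σ) (hI : IsDeligneBigrading σ F W I)
    (k p : ℤ) {v : V} (hv : v ∈ W k) :
    ∃ a ∈ F p ⊓ W k, ∃ b ∈ F (k - p + 1) ⊓ W k, v - a - σ b ∈ W (k - 1) := by
  obtain ⟨ab, hab, c, hc, rfl⟩ :=
    Submodule.mem_sup.mp (hI.weight_le_hodge_sup_conj_hodge hσ k p hv)
  obtain ⟨a, ha, _, ⟨b, hb, rfl⟩, rfl⟩ := Submodule.mem_sup.mp hab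
  exact ⟨a, ha, b, hb, by convert hc using 1; simp only [hσ.toSemilinear_apply]; abel⟩

lemma mem_weight_pred_of_sub_conj_mem (hσ : IsConjugation σ) (hI : IsDeligneBigrading σ F W I)
    {k p : ℤ} {a b : V} (ha : a ∈ F p ⊓ W k) (hb : b ∈ F (k - p + 1) ⊓ W k)
    (hab : a - σ b ∈ W (k - 1)) : a ∈ W (k - 1) := by
  rw [hI.hodge_eq_spanOn p, hI.weight_eq_spanOn k, hI.spanOn_inf_spanOn] at ha
  rw [hI.hodge_eq_spanOn, hI.weight_eq_spanOn k, hI.spanOn_inf_spanOn] at hb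
  rw [hI.weight_eq_spanOn] at hab ⊢
  have hσb : σ b ∈ spanOn I {pq | pq.1 < p ∧ pq.1 + pq.2 = k ∨ pq.1 + pq.2 ≤ k - 1} :=
    hI.conj_mem_spanOn hσ (fun pq h => ⟨by grind, fun r hr s hs => by grind⟩) hb
  have ha' : a ∈ spanOn I {pq | pq.1 < p ∧ pq.1 + pq.2 = k ∨ pq.1 + pq.2 ≤ k - 1} := by
    rw [← sub_add_cancel a (σ b)]
    exact add_mem (spanOn_mono (fun pq h => Or.inr h) hab) hσb
  have hmem := hI.spanOn_inf_spanOn _ _ ▸ Submodule.mem_inf.mpr ⟨ha, ha'⟩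
  exact spanOn_mono (fun pq h => by grind) hmem

lemma isMHS (hσ : IsConjugation σ) (hI : IsDeligneBigrading σ F W I) (hW : FinIncrFil W)
    (hF : FinDecrFil F) : IsMHS σ F W :=
  ⟨hW, fun _ _ hv => hI.conj_mem_weight hσ hv, hF, fun k p =>
    ⟨fun _ hv => hI.exists_hodge_decomposition hσ k p hv,
      fun _ ha _ hb hab => hI.mem_weight_pred_of_sub_conj_mem hσ ha hb hab⟩⟩

end IsDeligneBigrading

namespace MemLambdaMM

variable {X : Module.End ℂ V}

lemma spanOn_le_comap (hX : MemLambdaMM I X) {A B : Set (ℤ × ℤ)}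
    (hAB : ∀ pq ∈ A, ∀ r < pq.1, ∀ s < pq.2, (r, s) ∈ B) : spanOn I A ≤ (spanOn I B).comap X :=
  spanOn_le fun pq hpq v hv => by
    have hXv := hX _ _ v hv
    rw [iSup_lt_lt_eq_spanOn] at hXv
    exact spanOn_mono (fun rs h => hAB pq hpq _ h.1 _ h.2) hXv

lemma iSup_lt_lt_le_comap (hX : MemLambdaMM I X) (p q : ℤ) :
    (⨆ (r : ℤ) (_ : r < p) (s : ℤ) (_ : s < q), I r s)
      ≤ (⨆ (r : ℤ) (_ : r < p) (s : ℤ) (_ : s < q), I r s).comap X := by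
  rw [iSup_lt_lt_eq_spanOn]
  exact hX.spanOn_le_comap fun pq h r hr s hs => by grind

lemma weight_le_comap_weight_pred (hX : MemLambdaMM I X) (hI : IsDeligneBigrading σ F W I)
    (k : ℤ) : W k ≤ (W (k - 1)).comap X := by
  rw [hI.weight_eq_spanOn k, hI.weight_eq_spanOn (k - 1)]
  exact hX.spanOn_le_comap fun pq h r hr s hs => by grind

lemma weight_le_comap_weight (hX : MemLambdaMM I X) (hI : IsDeligneBigrading σ F W I)
    (k : ℤ) : W k ≤ (W k).comap X := by
  rw [hI.weight_eq_spanOn k]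
  exact hX.spanOn_le_comap fun pq h r hr s hs => by grind

lemma isNilpotent (hX : MemLambdaMM I X) (hI : IsDeligneBigrading σ F W I) (hW : FinIncrFil W) :
    IsNilpotent X :=
  hW.isNilpotent (hX.weight_le_comap_weight_pred hI)

end MemLambdaMM

lemma ActsAsDeligneGrading.conj {Y : Module.End ℂ V} (hY : ActsAsDeligneGrading I Y)
    {E E' : Module.End ℂ V} (h : E' * E = 1) :
    ActsAsDeligneGrading (fun p q => (I p q).map E) (E * Y * E') := by
  rintro p q _ ⟨u, hu, rfl⟩
  rw [Module.End.mul_apply, Module.End.mul_apply, ← Module.End.mul_apply E' E, h,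
    Module.End.one_apply, hY p q u hu, map_smul]

lemma IsDeligneBigrading.map_expEnd [FiniteDimensional ℂ V] (hσ : IsConjugation σ)
    (hI : IsDeligneBigrading σ F W I)
    {lam : Module.End ℂ V} (hlam : MemLambdaMM I lam) (hnil : IsNilpotent lam) :
    IsDeligneBigrading σ (fun p => (F p).map (expEnd lam)) W
      (fun p q => (I p q).map (expEnd lam)) := by
  refine ⟨hI.1.map_linearEquiv (expEquiv hnil), fun p => ?_, fun k => ?_, ?_⟩
  · simp only [hI.2.1 p, Submodule.map_iSup]
  · conv_lhs => rw [← map_expEnd_eq_self hnil (hlam.weight_le_comap_weight hI k), hI.2.2.1 k]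
    simp only [Submodule.map_iSup]
  rintro p q _ ⟨u, hu, rfl⟩
  -- `e^λ` fixes `I^{q,p} + L^{q,p}`, and `σ(e^λ u) = σ u + σ(e^λ u - u)` lies in it
  have hfix := map_expEnd_eq_self hnil
    (U := I q p ⊔ ⨆ (r : ℤ) (_ : r < q) (s : ℤ) (_ : s < p), I r s)
    (sup_le (fun w hw => Submodule.mem_sup_right (hlam q p w hw))
      (fun w hw => Submodule.mem_sup_right (hlam.iSup_lt_lt_le_comap q p hw)))
  rw [Submodule.map_sup] at hfix
  simp only [Submodule.map_iSup] at hfix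
  rw [hfix, ← add_sub_cancel u (expEnd lam u), map_add]
  have hdiff := expEnd_apply_sub_mem (hlam.iSup_lt_lt_le_comap p q) (hlam p q u hu)
  refine add_mem (hI.2.2.2 p q u hu) (Submodule.mem_sup_right ?_)
  rw [iSup_lt_lt_eq_spanOn] at hdiff ⊢
  exact hI.conj_mem_spanOn hσ (fun pq h => ⟨by grind, fun r hr s hs => by grind⟩) hdiff

end Bigrading

/-- for a mixed Hodge structure `(F, W)` with Deligne bigrading `I` and
`λ ∈ Λ^{-1,-1}_{(F,W)}`, the pair `(e^λ F, W)` is a mixed Hodge structure, its Deligne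
bigrading is `e^λ (I^{p,q})`, and its Deligne grading is `e^λ Y_{(F,W)} e^{-λ}`. -/
theorem zero_loci_stmt9 {V : Type*} [AddCommGroup V] [Module ℂ V] [FiniteDimensional ℂ V]
    (σ : V →ₗ[ℝ] V) (hσ : IsConjugation σ)
    (F W : ℤ → Submodule ℂ V) (hFW : IsMHS σ F W)
    (I : ℤ → ℤ → Submodule ℂ V) (hI : IsDeligneBigrading σ F W I)
    (lam : Module.End ℂ V) (hlam : MemLambdaMM I lam) :
    IsMHS σ (fun p => (F p).map (expEnd lam)) W ∧
    IsDeligneBigrading σ (fun p => (F p).map (expEnd lam)) W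
      (fun p q => (I p q).map (expEnd lam)) ∧
    ∀ Y : Module.End ℂ V, ActsAsDeligneGrading I Y →
      ActsAsDeligneGrading (fun p q => (I p q).map (expEnd lam))
        (expEnd lam * Y * expEnd (-lam)) := by
  have hnil : IsNilpotent lam := hlam.isNilpotent hI hFW.1
  have hbig := hI.map_expEnd hσ hlam hnil
  refine ⟨hbig.isMHS hσ hFW.1 (hFW.2.2.1.map_of_surjective (expEquiv hnil).surjective), hbig,
    fun Y hY => hY.conj ?_⟩
  simpa using expEnd_mul_expEnd_neg hnil.neg
end
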